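/- Every top-down weighted linear indexed grammar is weakly equivalent to a binarized one, whose productions all have one of the forms X[∘A] → Y[S] Z[∘β], X[∘A] → Y[∘β] Z[S], X[∘A] → Y[∘β], or X[A] → a, with |β| ≤ 2. -/

import Mathlib

open scoped BigOperators

namespace CtrlForm

/-- Sentential forms: nonterminals carrying a stack (top at the right of the
list), and terminals. -/
abbrev SForm (N T Γ : Type) := List ((N × List Γ) ⊕ T)

/-- Productions of a (weighted) linear indexed grammar:
`rw X β Ψ X' β' Ψ'` is the production `X[∘β] → Ψ X'[∘β'] Ψ'`, where `X'` is
the distinguished child inheriting the rest of the stack, and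
`term X β a` is the production `X[β] → a` with `a ∈ Σ ∪ {ε}`. -/
inductive LIGProd (N T Γ : Type) where
  | rw (X : N) (β : List Γ) (Ψ : SForm N T Γ) (X' : N) (β' : List Γ) (Ψ' : SForm N T Γ)
  | term (X : N) (β : List Γ) (a : Option T)

/-- A weighted linear indexed grammar (WLIG) over a weight type `A`. -/
structure WLIG (N T Γ A : Type) where
  prods : List (LIGProd N T Γ)
  start : N
  initStack : List Γ
  wt : LIGProd N T Γ → A

namespace WLIG

variable {N T Γ A : Type}

/-- A single derivation step of a WLIG. -/
inductive Step (G : WLIG N T Γ A) : SForm N T Γ → SForm N T Γ → Prop where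
  | rw (pre post : SForm N T Γ) (σ : List Γ) {X : N} {β : List Γ} {Ψ : SForm N T Γ}
      {X' : N} {β' : List Γ} {Ψ' : SForm N T Γ}
      (hp : LIGProd.rw X β Ψ X' β' Ψ' ∈ G.prods) :
      Step G (pre ++ [Sum.inl (X, σ ++ β)] ++ post)
        (pre ++ Ψ ++ [Sum.inl (X', σ ++ β')] ++ Ψ' ++ post)
  | term (pre post : SForm N T Γ) {X : N} {β : List Γ} {a : Option T}
      (hp : LIGProd.term X β a ∈ G.prods) :
      Step G (pre ++ [Sum.inl (X, β)] ++ post)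
        (pre ++ a.toList.map Sum.inr ++ post)

/-- The derivation relation of a WLIG. -/
def Derives (G : WLIG N T Γ A) : SForm N T Γ → SForm N T Γ → Prop :=
  Relation.ReflTransGen G.Step

/-- The string language of a WLIG (weights ignored). -/
def language (G : WLIG N T Γ A) : Set (List T) :=
  { w | G.Derives [Sum.inl (G.start, G.initStack)] (w.map Sum.inr) }

/-- Every nonterminal occurring in the sentential form `Ψ` carries the
stack `[S]`. -/
def AuxTD (S : Γ) (Ψ : SForm N T Γ) : Prop :=
  ∀ x ∈ Ψ, ∀ Y : N, ∀ σ : List Γ, x = Sum.inl (Y, σ) → σ = [S]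

/-- A WLIG is top-down if every production either pops exactly one stack
symbol from the distinguished nonterminal's stack (`X[∘A] → Ψ X'[∘β] Ψ'`)
or is terminal with singleton stack (`X[A] → a`), all auxiliary
nonterminals carry the initial stack `[S]`, and the initial stack is `[S]`. -/
def IsTopDown (G : WLIG N T Γ A) : Prop :=
  ∃ S : Γ, G.initStack = [S] ∧
    ∀ p ∈ G.prods,
      (∃ X A' Ψ X' β Ψ', p = LIGProd.rw X [A'] Ψ X' β Ψ' ∧ AuxTD S Ψ ∧ AuxTD S Ψ') ∨
      (∃ X A' a, p = LIGProd.term X [A'] a)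

end WLIG

namespace WLIG

/-- A top-down WLIG is binarized if every production has one of the forms
`X[∘A] → Y[S] Z[∘β]`, `X[∘A] → Y[∘β] Z[S]`, `X[∘A] → Y[∘β]`, or
`X[A] → a`, with `|β| ≤ 2`. -/
def IsBinarizedTopDown {N T Γ A : Type} (S : Γ) (G : WLIG N T Γ A) : Prop :=
  G.initStack = [S] ∧
    ∀ p ∈ G.prods,
      (∃ X A' Y Z β, β.length ≤ 2 ∧
        p = LIGProd.rw X [A'] [Sum.inl (Y, [S])] Z β []) ∨
      (∃ X A' Y Z β, β.length ≤ 2 ∧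
        p = LIGProd.rw X [A'] [] Y β [Sum.inl (Z, [S])]) ∨
      (∃ X A' Y β, β.length ≤ 2 ∧
        p = LIGProd.rw X [A'] [] Y β []) ∨
      (∃ X A' a, p = LIGProd.term X [A'] a)

end WLIG

/-!
Each top-down production `X[∘A] → Ψ X'[∘β] Ψ'` is replaced by `X[∘A] → s[∘A]` followed by a
chain of fresh state nonterminals that emit the auxiliary symbols of `Ψ` one at a time on the
left, then those of `Ψ'` on the right, and finally build `β` by replacing the top with two
symbols at a time; terminals are emitted through preterminals `t[S] → t`. The original grammar
is simulated production by production. Conversely, expanding every state into the sentential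
form it stands for maps each production of the binarized grammar either to the identity or to
the original production, so derivations project back.
-/

namespace LIGProd

variable {N T Γ : Type}

/-- The two sides of an application of a production to a nonterminal whose stack is `σ ++ β`;
a terminal production ignores `σ`. -/
def lhs (σ : List Γ) : LIGProd N T Γ → SForm N T Γ
  | rw X β _ _ _ _ => [.inl (X, σ ++ β)]
  | term X β _ => [.inl (X, β)]

def rhs (σ : List Γ) : LIGProd N T Γ → SForm N T Γ
  | rw _ _ Ψ X' β' Ψ' => Ψ ++ [.inl (X', σ ++ β')] ++ Ψ'
  | term _ _ a => a.toList.map .inr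

end LIGProd

namespace WLIG

variable {N T Γ A N' Γ' A' : Type}

theorem step_iff {G : WLIG N T Γ A} {Φ₁ Φ₂ : SForm N T Γ} :
    G.Step Φ₁ Φ₂ ↔ ∃ p ∈ G.prods, ∃ σ pre post,
      Φ₁ = pre ++ p.lhs σ ++ post ∧ Φ₂ = pre ++ p.rhs σ ++ post := by
  constructor
  · rintro (⟨pre, post, σ, hp⟩ | ⟨pre, post, hp⟩)
    · exact ⟨_, hp, σ, pre, post, rfl, by simp [LIGProd.rhs]⟩
    · exact ⟨_, hp, [], pre, post, rfl, rfl⟩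
  · rintro ⟨_ | _, hp, σ, pre, post, rfl, rfl⟩
    · simpa [LIGProd.lhs, LIGProd.rhs] using Step.rw pre post σ hp
    · exact Step.term pre post hp

theorem derives_of_mem {G : WLIG N T Γ A} {p : LIGProd N T Γ} (hp : p ∈ G.prods)
    (σ : List Γ) : G.Derives (p.lhs σ) (p.rhs σ) :=
  .single (step_iff.mpr ⟨p, hp, σ, [], [], by simp, by simp⟩)

theorem Derives.trans {G : WLIG N T Γ A} {Φ₁ Φ₂ Φ₃ : SForm N T Γ} (h₁ : G.Derives Φ₁ Φ₂)
    (h₂ : G.Derives Φ₂ Φ₃) : G.Derives Φ₁ Φ₃ :=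
  Relation.ReflTransGen.trans h₁ h₂

instance (G : WLIG N T Γ A) : Trans G.Derives G.Derives G.Derives := ⟨Derives.trans⟩

theorem Derives.append_context {G : WLIG N T Γ A} {Φ₁ Φ₂ : SForm N T Γ}
    (h : G.Derives Φ₁ Φ₂) (P Q : SForm N T Γ) : G.Derives (P ++ Φ₁ ++ Q) (P ++ Φ₂ ++ Q) :=
  Relation.ReflTransGen.lift (fun Φ => P ++ Φ ++ Q) (fun _ _ hs => by
    obtain ⟨p, hp, σ, pre, post, rfl, rfl⟩ := step_iff.mp hs
    exact step_iff.mpr ⟨p, hp, σ, P ++ pre, post ++ Q, by simp, by simp⟩) _ _ h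

theorem Derives.flatMap {G : WLIG N T Γ A} {G' : WLIG N' T Γ' A'}
    (f : (N × List Γ) ⊕ T → SForm N' T Γ')
    (hf : ∀ p ∈ G.prods, ∀ σ, G'.Derives ((p.lhs σ).flatMap f) ((p.rhs σ).flatMap f))
    {Φ₁ Φ₂ : SForm N T Γ} (h : G.Derives Φ₁ Φ₂) :
    G'.Derives (Φ₁.flatMap f) (Φ₂.flatMap f) := by
  refine Relation.ReflTransGen.lift' (p := G'.Step) (fun Φ => Φ.flatMap f) (fun _ _ hs => ?_) _ _ h
  obtain ⟨p, hp, σ, pre, post, rfl, rfl⟩ := step_iff.mp hs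
  simpa [Function.onFun, Derives] using (hf p hp σ).append_context (pre.flatMap f) (post.flatMap f)

theorem Derives.map {G : WLIG N T Γ A} {G' : WLIG N' T Γ' A'}
    (f : (N × List Γ) ⊕ T → (N' × List Γ') ⊕ T)
    (hf : ∀ p ∈ G.prods, ∀ σ, G'.Derives ((p.lhs σ).map f) ((p.rhs σ).map f))
    {Φ₁ Φ₂ : SForm N T Γ} (h : G.Derives Φ₁ Φ₂) :
    G'.Derives (Φ₁.map f) (Φ₂.map f) := by
  simp only [List.map_eq_flatMap] at hf ⊢
  exact h.flatMap _ hf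

end WLIG

section Binarize

open WLIG

variable {N T Γ A : Type}

def IsTopDownProd (S : Γ) (p : LIGProd N T Γ) : Prop :=
  (∃ X A' Ψ X' β Ψ', p = LIGProd.rw X [A'] Ψ X' β Ψ' ∧ AuxTD S Ψ ∧ AuxTD S Ψ') ∨
    (∃ X A' a, p = LIGProd.term X [A'] a)

def IsBinaryProd (S : Γ) (p : LIGProd N T Γ) : Prop :=
  (∃ X A' Y Z β, β.length ≤ 2 ∧ p = LIGProd.rw X [A'] [Sum.inl (Y, [S])] Z β []) ∨
    (∃ X A' Y Z β, β.length ≤ 2 ∧ p = LIGProd.rw X [A'] [] Y β [Sum.inl (Z, [S])]) ∨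
    (∃ X A' Y β, β.length ≤ 2 ∧ p = LIGProd.rw X [A'] [] Y β []) ∨
    (∃ X A' a, p = LIGProd.term X [A'] a)

/-- A state with stack `σ ++ [top]` that still has to emit the auxiliary symbols `left` to its
left and `rightRev.reverse` to its right, and then to become `target[∘(σ ++ push)]`. -/
structure ChainState (N T Γ : Type) where
  left : SForm N T Γ
  top : Γ
  push : List Γ
  target : N
  rightRev : SForm N T Γ

/-- The preterminals (summand `T`) are needed because a binarized production cannot emit a
terminal next to a nonterminal. -/
abbrev BinNT (N T Γ : Type) := N ⊕ (ChainState N T Γ ⊕ T)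

abbrev ChainState.nt (s : ChainState N T Γ) : BinNT N T Γ := .inr (.inl s)

def auxNT : (N × List Γ) ⊕ T → BinNT N T Γ
  | .inl (Y, _) => .inl Y
  | .inr t => .inr (.inr t)

def resetStack (S : Γ) : (N × List Γ) ⊕ T → (N × List Γ) ⊕ T
  | .inl (Y, _) => .inl (Y, [S])
  | .inr t => .inr t

def emitProds (S : Γ) : (N × List Γ) ⊕ T → List (LIGProd (BinNT N T Γ) T Γ)
  | .inl _ => []
  | .inr t => [.term (auxNT (.inr t)) [S] (some t)]

/-- The push phase replaces the top `c` by `d₁ d₂` and remembers `d₂` as the new top, so each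
step pushes one symbol of `δ` net. -/
def chainProds (S : Γ) : ChainState N T Γ → List (LIGProd (BinNT N T Γ) T Γ)
  | s@⟨y :: L, c, δ, X', R⟩ =>
      .rw s.nt [c] [.inl (auxNT y, [S])] (ChainState.nt ⟨L, c, δ, X', R⟩) [c] [] ::
        (emitProds S y ++ chainProds S ⟨L, c, δ, X', R⟩)
  | s@⟨[], c, δ, X', z :: R⟩ =>
      .rw s.nt [c] [] (ChainState.nt ⟨[], c, δ, X', R⟩) [c] [.inl (auxNT z, [S])] ::
        (emitProds S z ++ chainProds S ⟨[], c, δ, X', R⟩)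
  | s@⟨[], c, d₁ :: d₂ :: d₃ :: δ, X', []⟩ =>
      .rw s.nt [c] [] (ChainState.nt ⟨[], d₂, d₂ :: d₃ :: δ, X', []⟩) [d₁, d₂] [] ::
        chainProds S ⟨[], d₂, d₂ :: d₃ :: δ, X', []⟩
  | s@⟨[], c, [], X', []⟩ => [.rw s.nt [c] [] (.inl X') [] []]
  | s@⟨[], c, [d₁], X', []⟩ => [.rw s.nt [c] [] (.inl X') [d₁] []]
  | s@⟨[], c, [d₁, d₂], X', []⟩ => [.rw s.nt [c] [] (.inl X') [d₁, d₂] []]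
termination_by s => s.left.length + s.push.length + s.rightRev.length

def binProds (S : Γ) : LIGProd N T Γ → List (LIGProd (BinNT N T Γ) T Γ)
  | .rw X [A'] Ψ X' β Ψ' =>
      .rw (.inl X) [A'] [] (ChainState.nt ⟨Ψ, A', β, X', Ψ'.reverse⟩) [A'] [] ::
        chainProds S ⟨Ψ, A', β, X', Ψ'.reverse⟩
  | .term X [A'] a => [.term (.inl X) [A'] a]
  | _ => []

def binarize (G : WLIG N T Γ A) (S : Γ) (wt : LIGProd (BinNT N T Γ) T Γ → A) :
    WLIG (BinNT N T Γ) T Γ A :=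
  ⟨G.prods.flatMap (binProds S), .inl G.start, [S], wt⟩

def ChainState.expand (S : Γ) (s : ChainState N T Γ) (τ : List Γ) : SForm N T Γ :=
  s.left.map (resetStack S) ++ .inl (s.target, τ.dropLast ++ s.push) ::
    (s.rightRev.map (resetStack S)).reverse

def projItem (S : Γ) : (BinNT N T Γ × List Γ) ⊕ T → SForm N T Γ
  | .inr t => [.inr t]
  | .inl (.inl Y, τ) => [.inl (Y, τ)]
  | .inl (.inr (.inl s), τ) => s.expand S τ
  | .inl (.inr (.inr t), _) => [.inr t]

def embedItem : (N × List Γ) ⊕ T → (BinNT N T Γ × List Γ) ⊕ T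
  | .inl (Y, τ) => .inl (.inl Y, τ)
  | .inr t => .inr t

theorem map_resetStack {S : Γ} {Ψ : SForm N T Γ} (h : AuxTD S Ψ) : Ψ.map (resetStack S) = Ψ := by
  refine (List.map_congr_left fun x hx => ?_).trans Ψ.map_id
  rcases x with ⟨Y, σ⟩ | t
  · simp [resetStack, h _ hx Y σ rfl]
  · rfl

@[simp] theorem projItem_nt (S : Γ) (s : ChainState N T Γ) (τ : List Γ) :
    projItem S (.inl (s.nt, τ)) = s.expand S τ :=
  rfl

@[simp] theorem projItem_auxNT (S : Γ) (y : (N × List Γ) ⊕ T) :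
    projItem S (.inl (auxNT y, [S])) = [resetStack S y] := by
  rcases y with ⟨Y, σ⟩ | t <;> rfl

@[simp] theorem flatMap_projItem_map_inr (S : Γ) (w : List T) :
    (w.map .inr : SForm (BinNT N T Γ) T Γ).flatMap (projItem S) = w.map .inr := by
  simp [List.flatMap_map, projItem, ← List.map_eq_flatMap]

@[simp] theorem embedItem_comp_inr :
    (embedItem ∘ Sum.inr : T → (BinNT N T Γ × List Γ) ⊕ T) = Sum.inr :=
  rfl

theorem emitProds_silent (S : Γ) (y : (N × List Γ) ⊕ T) :
    ∀ q ∈ emitProds S y, ∀ σ,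
      (q.lhs σ).flatMap (projItem S) = (q.rhs σ).flatMap (projItem S) := by
  rcases y with ⟨Y, τ⟩ | t
  · simp [emitProds]
  · simp [emitProds, LIGProd.lhs, LIGProd.rhs, auxNT, projItem]

theorem chainProds_silent (S : Γ) (s : ChainState N T Γ) :
    ∀ q ∈ chainProds S s, ∀ σ,
      (q.lhs σ).flatMap (projItem S) = (q.rhs σ).flatMap (projItem S) := by
  induction s using chainProds.induct with
  | case1 y L c δ X' R ih =>
    simp only [chainProds, List.mem_cons, List.mem_append]
    rintro q (rfl | hq | hq) σ
    · simp [LIGProd.lhs, LIGProd.rhs, ChainState.expand]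
    · exact emitProds_silent S y q hq σ
    · exact ih q hq σ
  | case2 c δ X' z R ih =>
    simp only [chainProds, List.mem_cons, List.mem_append]
    rintro q (rfl | hq | hq) σ
    · simp [LIGProd.lhs, LIGProd.rhs, ChainState.expand]
    · exact emitProds_silent S z q hq σ
    · exact ih q hq σ
  | case3 c d₁ d₂ d₃ δ X' ih =>
    simp only [chainProds, List.mem_cons]
    rintro q (rfl | hq) σ
    · have : (σ ++ [d₁, d₂]).dropLast = σ ++ [d₁] := by
        rw [show σ ++ [d₁, d₂] = σ ++ [d₁] ++ [d₂] by simp, List.dropLast_concat]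
      simp [LIGProd.lhs, LIGProd.rhs, projItem, ChainState.expand, this]
    · exact ih q hq σ
  | case4 | case5 | case6 =>
    simp [chainProds, LIGProd.lhs, LIGProd.rhs, projItem, ChainState.expand]

theorem emitProds_isBinaryProd (S : Γ) (y : (N × List Γ) ⊕ T) :
    ∀ q ∈ emitProds S y, IsBinaryProd S q := by
  rcases y with _ | t
  · simp [emitProds]
  · simp only [emitProds, List.mem_singleton]
    rintro q rfl
    exact .inr <| .inr <| .inr ⟨_, _, _, rfl⟩

theorem chainProds_isBinaryProd (S : Γ) (s : ChainState N T Γ) :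
    ∀ q ∈ chainProds S s, IsBinaryProd S q := by
  induction s using chainProds.induct with
  | case1 y L c δ X' R ih =>
    simp only [chainProds, List.mem_cons, List.mem_append]
    rintro q (rfl | hq | hq)
    · exact .inl ⟨_, _, _, _, [c], by simp, rfl⟩
    · exact emitProds_isBinaryProd S y q hq
    · exact ih q hq
  | case2 c δ X' z R ih =>
    simp only [chainProds, List.mem_cons, List.mem_append]
    rintro q (rfl | hq | hq)
    · exact .inr <| .inl ⟨_, _, _, _, [c], by simp, rfl⟩
    · exact emitProds_isBinaryProd S z q hq
    · exact ih q hq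
  | case3 c d₁ d₂ d₃ δ X' ih =>
    simp only [chainProds, List.mem_cons]
    rintro q (rfl | hq)
    · exact .inr <| .inr <| .inl ⟨_, _, _, [d₁, d₂], by simp, rfl⟩
    · exact ih q hq
  | case4 | case5 | case6 =>
    simp only [chainProds, List.mem_singleton]
    rintro q rfl
    exact .inr <| .inr <| .inl ⟨_, _, _, _, by simp, rfl⟩

theorem binProds_isBinaryProd (S : Γ) (p : LIGProd N T Γ) :
    ∀ q ∈ binProds S p, IsBinaryProd S q := by
  fun_cases binProds S p
  · simp only [List.mem_cons]
    rintro q (rfl | hq)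
    · exact .inr <| .inr <| .inl ⟨_, _, _, _, by simp, rfl⟩
    · exact chainProds_isBinaryProd S _ q hq
  · simp only [List.mem_singleton]
    rintro q rfl
    exact .inr <| .inr <| .inr ⟨_, _, _, rfl⟩
  · simp

theorem derives_auxNT {G' : WLIG (BinNT N T Γ) T Γ A} {S : Γ} {y : (N × List Γ) ⊕ T}
    (h : ∀ q ∈ emitProds S y, q ∈ G'.prods) :
    G'.Derives [.inl (auxNT y, [S])] [embedItem (resetStack S y)] := by
  rcases y with _ | t
  · exact .refl
  · exact derives_of_mem (h _ (List.mem_singleton_self _)) []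

theorem derives_chain {G' : WLIG (BinNT N T Γ) T Γ A} (S : Γ) (s : ChainState N T Γ)
    (hs : ∀ q ∈ chainProds S s, q ∈ G'.prods) (σ : List Γ) :
    G'.Derives [.inl (s.nt, σ ++ [s.top])] ((s.expand S (σ ++ [s.top])).map embedItem) := by
  induction s using chainProds.induct generalizing σ with
  | case1 y L c δ X' R ih =>
    simp only [chainProds, List.mem_cons, List.mem_append] at hs
    let s' : ChainState N T Γ := ⟨L, c, δ, X', R⟩
    calc G'.Derives _ ([.inl (auxNT y, [S])] ++ [.inl (s'.nt, σ ++ [c])] ++ []) := by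
          simpa [LIGProd.lhs, LIGProd.rhs] using derives_of_mem (hs _ (.inl rfl)) σ
      G'.Derives _ ([embedItem (resetStack S y)] ++ [.inl (s'.nt, σ ++ [c])] ++ []) :=
          (derives_auxNT fun q hq => hs q (.inr (.inl hq))).append_context [] _
      G'.Derives _ ([embedItem (resetStack S y)] ++ (s'.expand S (σ ++ [c])).map embedItem ++ []) :=
          (ih (fun q hq => hs q (.inr (.inr hq))) σ).append_context _ []
      _ = _ := by simp [s', ChainState.expand]
  | case2 c δ X' z R ih =>
    simp only [chainProds, List.mem_cons, List.mem_append] at hs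
    let s' : ChainState N T Γ := ⟨[], c, δ, X', R⟩
    calc G'.Derives _ ([] ++ [.inl (s'.nt, σ ++ [c])] ++ [.inl (auxNT z, [S])]) := by
          simpa [LIGProd.lhs, LIGProd.rhs] using derives_of_mem (hs _ (.inl rfl)) σ
      G'.Derives _ ([] ++ [.inl (s'.nt, σ ++ [c])] ++ [embedItem (resetStack S z)]) := by
          simpa using (derives_auxNT fun q hq => hs q (.inr (.inl hq))).append_context
            [.inl (s'.nt, σ ++ [c])] []
      G'.Derives _ ([] ++ (s'.expand S (σ ++ [c])).map embedItem ++ [embedItem (resetStack S z)]) :=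
          (ih (fun q hq => hs q (.inr (.inr hq))) σ).append_context [] _
      _ = _ := by simp [s', ChainState.expand]
  | case3 c d₁ d₂ d₃ δ X' ih =>
    simp only [chainProds, List.mem_cons] at hs
    let s' : ChainState N T Γ := ⟨[], d₂, d₂ :: d₃ :: δ, X', []⟩
    calc G'.Derives _ [.inl (s'.nt, σ ++ [d₁] ++ [d₂])] := by
          simpa [LIGProd.lhs, LIGProd.rhs] using derives_of_mem (hs _ (.inl rfl)) σ
      G'.Derives _ ((s'.expand S (σ ++ [d₁] ++ [d₂])).map embedItem) :=
          ih (fun q hq => hs q (.inr hq)) (σ ++ [d₁])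
      _ = _ := by simp [s', ChainState.expand]
  | case4 | case5 | case6 =>
    simp only [chainProds, List.mem_singleton, forall_eq] at hs
    simpa [LIGProd.lhs, LIGProd.rhs, ChainState.expand, embedItem] using derives_of_mem hs σ

theorem derives_proj_of_mem_binProds {G : WLIG N T Γ A} {S : Γ} {p : LIGProd N T Γ}
    (hpG : p ∈ G.prods) (hp : IsTopDownProd S p) :
    ∀ q ∈ binProds S p, ∀ σ,
      G.Derives ((q.lhs σ).flatMap (projItem S)) ((q.rhs σ).flatMap (projItem S)) := by
  rcases hp with ⟨X, A', Ψ, X', β, Ψ', rfl, hΨ, hΨ'⟩ | ⟨X, A', a, rfl⟩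
  · simp only [binProds, List.mem_cons]
    rintro q (rfl | hq) σ
    · simpa [LIGProd.lhs, LIGProd.rhs, projItem, ChainState.expand, map_resetStack hΨ,
        map_resetStack hΨ'] using derives_of_mem hpG σ
    · rw [chainProds_silent S _ q hq σ]
      exact .refl
  · simp only [binProds, List.mem_singleton]
    rintro q rfl σ
    simpa [LIGProd.lhs, LIGProd.rhs, projItem] using derives_of_mem hpG σ

theorem derives_embed_of_binProds_subset {G' : WLIG (BinNT N T Γ) T Γ A} {S : Γ}
    {p : LIGProd N T Γ} (hp : IsTopDownProd S p) (h : ∀ q ∈ binProds S p, q ∈ G'.prods)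
    (σ : List Γ) : G'.Derives ((p.lhs σ).map embedItem) ((p.rhs σ).map embedItem) := by
  rcases hp with ⟨X, A', Ψ, X', β, Ψ', rfl, hΨ, hΨ'⟩ | ⟨X, A', a, rfl⟩
  · simp only [binProds, List.mem_cons, forall_eq_or_imp] at h
    have hhead := derives_of_mem h.1 σ
    have hchain := derives_chain S _ h.2 σ
    have hΨ'rev : Ψ'.reverse.map (resetStack S) = Ψ'.reverse := by
      rw [List.map_reverse, map_resetStack hΨ']
    simp only [LIGProd.lhs, LIGProd.rhs, ChainState.expand, map_resetStack hΨ, hΨ'rev]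
      at hhead hchain ⊢
    simpa [embedItem] using hhead.trans hchain
  · simp only [binProds, List.mem_singleton, forall_eq] at h
    simpa [LIGProd.lhs, LIGProd.rhs, embedItem] using derives_of_mem h σ

theorem isBinarizedTopDown_binarize (G : WLIG N T Γ A) (S : Γ)
    (wt : LIGProd (BinNT N T Γ) T Γ → A) : (binarize G S wt).IsBinarizedTopDown S :=
  ⟨rfl, fun q hq => by
    obtain ⟨p, -, hq⟩ := List.mem_flatMap.mp hq
    exact binProds_isBinaryProd S p q hq⟩

theorem language_binarize {G : WLIG N T Γ A} {S : Γ} (hS : G.initStack = [S])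
    (hG : ∀ p ∈ G.prods, IsTopDownProd S p) (wt : LIGProd (BinNT N T Γ) T Γ → A) :
    (binarize G S wt).language = G.language := by
  ext w
  constructor
  · intro h
    have hproj := h.flatMap (projItem S) fun q hq σ => by
      obtain ⟨p, hpG, hq⟩ := List.mem_flatMap.mp hq
      exact derives_proj_of_mem_binProds hpG (hG p hpG) q hq σ
    simpa [language, binarize, hS, projItem] using hproj
  · intro h
    have hembed := h.map (G' := binarize G S wt) embedItem fun p hp =>
      derives_embed_of_binProds_subset (hG p hp) fun q hq => List.mem_flatMap.mpr ⟨p, hp, hq⟩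
    simpa [language, binarize, hS, embedItem] using hembed

end Binarize

/-- Every top-down WLIG is weakly equivalent to a binarized top-down WLIG. -/
theorem every_topDown_wlig_weakly_equivalent_to_binarized
    {N T Γ A : Type} [Semiring A] (G : WLIG N T Γ A) (hG : G.IsTopDown) :
    ∃ (N' Γ' : Type) (G' : WLIG N' T Γ' A) (S : Γ'),
      G'.IsBinarizedTopDown S ∧ G'.language = G.language := by
  obtain ⟨S, hS, hprods⟩ := hG
  exact ⟨_, _, binarize G S fun _ => 1, S, isBinarizedTopDown_binarize G S _,
    language_binarize hS hprods _⟩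

end CtrlForm
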